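/- arXiv:2601.22106 — 6 statements merged into one kernel-verified Lean document; each statement's English description precedes it below -/
import Mathlib

section
/- If S is a singular symmetric positive semidefinite d×d matrix, then the function f_S(Q) = tr(S Q) − log(det Q) is unbounded from below on the cone of symmetric positive definite matrices. -/
/-
Pick `v ≠ 0` with `S v = 0` and move along the ray `Q t = 1 + t v vᵀ`, `t ≥ 0`. Since `S Q t = S`,
the trace term stays equal to `tr S`, while by the matrix determinant lemma
`det (Q t) = 1 + t ‖v‖²`, so `f_S (Q t) = tr S - log (1 + t ‖v‖²) → -∞`.
-/

open Matrix

/-- The Gaussian graphical loss `f_S(Q) = tr(S Q) − log (det Q)`. -/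
noncomputable def gaussLoss {d : ℕ} (S Q : Matrix (Fin d) (Fin d) ℝ) : ℝ :=
  (S * Q).trace - Real.log Q.det

open Filter

namespace Matrix

variable {m n k R : Type*} [Fintype n]

theorem mul_vecMulVec_eq_zero [NonUnitalSemiring R] {S : Matrix m n R} {v : n → R}
    (hv : S *ᵥ v = 0) (w : k → R) : S * vecMulVec v w = 0 := by
  rw [mul_vecMulVec, hv, zero_vecMulVec]

variable [DecidableEq n]

theorem mul_one_add_smul_vecMulVec [CommRing R] {S : Matrix m n R} {v : n → R}
    (hv : S *ᵥ v = 0) (t : R) (w : n → R) : S * (1 + t • vecMulVec v w) = S := by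
  rw [Matrix.mul_add, Matrix.mul_one, Matrix.mul_smul, mul_vecMulVec_eq_zero hv, smul_zero,
    add_zero]

theorem det_one_add_vecMulVec [CommRing R] (u v : n → R) :
    det (1 + vecMulVec u v) = 1 + v ⬝ᵥ u := by
  rw [vecMulVec_eq Unit, det_one_add_replicateCol_mul_replicateRow]

theorem posDef_one_add_smul_vecMulVec_self {t : ℝ} (ht : 0 ≤ t) (v : n → ℝ) :
    (1 + t • vecMulVec v v).PosDef := by
  have hvv : (vecMulVec v v).PosSemidef := by
    simpa using posSemidef_vecMulVec_self_star v
  exact PosDef.one.add_posSemidef (hvv.smul ht)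

end Matrix

theorem gaussLoss_one_add_smul_vecMulVec {d : ℕ} {S : Matrix (Fin d) (Fin d) ℝ}
    {v : Fin d → ℝ} (hv : S *ᵥ v = 0) (t : ℝ) :
    gaussLoss S (1 + t • vecMulVec v v) = S.trace - Real.log (1 + t * (v ⬝ᵥ v)) := by
  rw [gaussLoss, mul_one_add_smul_vecMulVec hv, ← smul_vecMulVec, det_one_add_vecMulVec,
    dotProduct_smul, smul_eq_mul]

theorem tendsto_gaussLoss_one_add_smul_vecMulVec_atBot {d : ℕ} {S : Matrix (Fin d) (Fin d) ℝ}
    {v : Fin d → ℝ} (hv : S *ᵥ v = 0) (hv0 : v ≠ 0) :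
    Tendsto (fun t : ℝ => gaussLoss S (1 + t • vecMulVec v v)) atTop atBot := by
  have hvv : 0 < v ⬝ᵥ v := by
    simpa using dotProduct_star_self_pos_iff.2 hv0
  have hdet : Tendsto (fun t : ℝ => 1 + t * (v ⬝ᵥ v)) atTop atTop :=
    tendsto_atTop_add_const_left _ _ (tendsto_id.atTop_mul_const hvv)
  simp only [gaussLoss_one_add_smul_vecMulVec hv, sub_eq_add_neg]
  exact tendsto_atBot_add_const_left _ _
    (tendsto_neg_atTop_atBot.comp (Real.tendsto_log_atTop.comp hdet))

theorem stmt_2_general {d : ℕ} (S : Matrix (Fin d) (Fin d) ℝ)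
    (hsing : S.det = 0) :
    ∀ M : ℝ, ∃ Q : Matrix (Fin d) (Fin d) ℝ, Q.PosDef ∧ gaussLoss S Q < M := by
  intro M
  obtain ⟨v, hv0, hSv⟩ := exists_mulVec_eq_zero_iff.2 hsing
  obtain ⟨t, ht, hlt⟩ := ((eventually_ge_atTop (0 : ℝ)).and
    ((tendsto_gaussLoss_one_add_smul_vecMulVec_atBot hSv hv0).eventually
      (eventually_lt_atBot M))).exists
  exact ⟨_, posDef_one_add_smul_vecMulVec_self ht v, hlt⟩

/-- If `S` is a singular symmetric positive semidefinite matrix, then `f_S` is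
unbounded from below on the cone of symmetric positive definite matrices. -/
theorem stmt_2 {d : ℕ} (S : Matrix (Fin d) (Fin d) ℝ) (hS : S.PosSemidef)
    (hsing : S.det = 0) :
    ∀ M : ℝ, ∃ Q : Matrix (Fin d) (Fin d) ℝ, Q.PosDef ∧ gaussLoss S Q < M :=
  stmt_2_general S hsing
end

section
/- Let S be symmetric positive definite. For any sequence (Q_k) of symmetric positive definite matrices whose largest eigenvalues tend to +∞, the values f_S(Q_k) = tr(S Q_k) − log(det Q_k) tend to +∞. -/
/-!
Let `c > 0` with `c • 1 ≤ S` in the Loewner order (e.g. the least eigenvalue of `S`). Then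
`tr (S Q) ≥ c · tr Q`, so in terms of the eigenvalues `μᵢ > 0` of `Q`,
`f_S(Q) ≥ ∑ᵢ (c μᵢ - log μᵢ)`. Since `log x ≤ x - 1`, each summand is at least
`c μᵢ / 2 + 1 + log (c / 2)`, hence `f_S(Q) ≥ (c / 2) λ_max(Q) + d (1 + log (c / 2))`.
-/

open Matrix Filter

lemma Real.half_mul_add_const_le_mul_sub_log {c x : ℝ} (hc : 0 < c) (hx : 0 < x) :
    c / 2 * x + (1 + Real.log (c / 2)) ≤ c * x - Real.log x := by
  have h := Real.log_le_sub_one_of_pos (show 0 < c / 2 * x by positivity)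
  rw [Real.log_mul (by positivity) hx.ne'] at h
  linarith

namespace Matrix

open scoped MatrixOrder ComplexOrder

variable {𝕜 n : Type*} [RCLike 𝕜] [Fintype n] [DecidableEq n]

lemma PosSemidef.trace_mul_nonneg {A B : Matrix n n 𝕜} (hA : A.PosSemidef) (hB : B.PosSemidef) :
    0 ≤ (A * B).trace := by
  obtain ⟨C, rfl⟩ := CStarAlgebra.nonneg_iff_eq_star_mul_self.mp hB.nonneg
  rw [← mul_assoc, trace_mul_cycle]
  exact (hA.mul_mul_conjTranspose_same C).trace_nonneg

lemma trace_mul_le_trace_mul_of_le {A B Q : Matrix n n 𝕜} (hAB : A ≤ B) (hQ : Q.PosSemidef) :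
    (A * Q).trace ≤ (B * Q).trace := by
  have := (le_iff.mp hAB).trace_mul_nonneg hQ
  rwa [sub_mul, trace_sub, sub_nonneg] at this

lemma PosDef.exists_pos_algebraMap_le [Nonempty n] {S : Matrix n n 𝕜} (hS : S.PosDef) :
    ∃ c > 0, algebraMap ℝ _ c ≤ S :=
  (CFC.exists_pos_algebraMap_le_iff hS.1.isSelfAdjoint).2 fun x hx => by
    rw [hS.1.spectrum_real_eq_range_eigenvalues] at hx
    obtain ⟨i, rfl⟩ := hx
    exact hS.eigenvalues_pos i

lemma PosDef.exists_pos_mul_trace_le_trace_mul [Nonempty n] {S : Matrix n n ℝ} (hS : S.PosDef) :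
    ∃ c > 0, ∀ Q : Matrix n n ℝ, Q.PosSemidef → c * Q.trace ≤ (S * Q).trace := by
  obtain ⟨c, hc, hcS⟩ := hS.exists_pos_algebraMap_le
  refine ⟨c, hc, fun Q hQ => ?_⟩
  have := trace_mul_le_trace_mul_of_le hcS hQ
  rwa [Algebra.algebraMap_eq_smul_one, smul_mul, one_mul, trace_smul, smul_eq_mul] at this

lemma PosDef.mul_trace_sub_log_det_eq_sum {Q : Matrix n n ℝ} (hQ : Q.PosDef) (c : ℝ) :
    c * Q.trace - Real.log Q.det =
      ∑ i, (c * hQ.1.eigenvalues i - Real.log (hQ.1.eigenvalues i)) := by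
  simp only [hQ.1.trace_eq_sum_eigenvalues, hQ.1.det_eq_prod_eigenvalues,
    RCLike.ofReal_real_eq_id, id]
  rw [Real.log_prod fun i _ => (hQ.eigenvalues_pos i).ne', Finset.sum_sub_distrib, Finset.mul_sum]

lemma PosDef.half_mul_iSup_eigenvalues_add_le [Nonempty n] {Q : Matrix n n ℝ} (hQ : Q.PosDef)
    {c : ℝ} (hc : 0 < c) :
    c / 2 * (⨆ i, hQ.1.eigenvalues i) + Fintype.card n * (1 + Real.log (c / 2)) ≤
      c * Q.trace - Real.log Q.det := by
  set μ := hQ.1.eigenvalues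
  obtain ⟨i₀, hi₀⟩ := Finite.exists_max μ
  have hsup : (⨆ i, μ i) = μ i₀ :=
    le_antisymm (ciSup_le hi₀) (le_ciSup (Finite.bddAbove_range μ) i₀)
  have hsum : c / 2 * μ i₀ ≤ ∑ i, c / 2 * μ i :=
    Finset.single_le_sum (f := fun i => c / 2 * μ i)
      (fun i _ => by have := hQ.eigenvalues_pos i; positivity) (Finset.mem_univ i₀)
  calc c / 2 * (⨆ i, μ i) + Fintype.card n * (1 + Real.log (c / 2))
      ≤ ∑ i, (c / 2 * μ i + (1 + Real.log (c / 2))) := by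
        rw [Finset.sum_add_distrib, Finset.sum_const, Finset.card_univ, nsmul_eq_mul, hsup]
        linarith
    _ ≤ ∑ i, (c * μ i - Real.log (μ i)) :=
        Finset.sum_le_sum fun i _ =>
          Real.half_mul_add_const_le_mul_sub_log hc (hQ.eigenvalues_pos i)
    _ = c * Q.trace - Real.log Q.det := (hQ.mul_trace_sub_log_det_eq_sum c).symm

end Matrix

/-- If `S` is symmetric positive definite and `(Q k)` is a sequence of symmetric
positive definite matrices with `λ_max (Q k) → +∞`, then `f_S (Q k) → +∞`. -/
theorem stmt_3 {d : ℕ} (hd : 0 < d) (S : Matrix (Fin d) (Fin d) ℝ) (hS : S.PosDef)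
    (Q : ℕ → Matrix (Fin d) (Fin d) ℝ) (hQ : ∀ k, (Q k).PosDef)
    (hmax : Tendsto (fun k => ⨆ i, (hQ k).1.eigenvalues i) atTop atTop) :
    Tendsto (fun k => gaussLoss S (Q k)) atTop atTop := by
  have : Nonempty (Fin d) := ⟨⟨0, hd⟩⟩
  obtain ⟨c, hc, hcS⟩ := hS.exists_pos_mul_trace_le_trace_mul
  have hbound (k : ℕ) : c / 2 * (⨆ i, (hQ k).1.eigenvalues i) + d * (1 + Real.log (c / 2)) ≤
      gaussLoss S (Q k) := by
    have hspec := (hQ k).half_mul_iSup_eigenvalues_add_le hc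
    rw [Fintype.card_fin] at hspec
    rw [gaussLoss]
    linarith [hcS (Q k) (hQ k).posSemidef]
  exact tendsto_atTop_mono hbound <|
    tendsto_atTop_add_const_right _ _ (hmax.const_mul_atTop (by positivity))
end

section
/- Let S be symmetric positive definite. For any sequence (Q_k) of symmetric positive definite matrices whose smallest eigenvalues tend to 0, the values f_S(Q_k) = tr(S Q_k) − log(det Q_k) tend to +∞. -/
/-!
Let `c > 0` be the smallest eigenvalue of `S` and `μ₁, …, μ_d` the eigenvalues of `Q`.
Then `tr(S Q) ≥ c tr Q`, so `f_S(Q) ≥ ∑ᵢ (c μᵢ - log μᵢ)`. Each summand is at least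
`1 + log c` (from `log (c μ) ≤ c μ - 1`), and the one for the smallest eigenvalue `μ` is
at least `-log μ`. Hence `f_S(Q) ≥ (d - 1)(1 + log c) - log λ_min(Q)`, which tends to `+∞`
as `λ_min(Q) → 0`.
-/

open Matrix Filter

namespace Matrix

variable {n : Type*} [Fintype n] [DecidableEq n]

theorem IsHermitian.mul_trace_le_trace_mul_of_le_eigenvalues {S Q : Matrix n n ℝ}
    (hS : S.IsHermitian) (hQ : Q.PosSemidef) {c : ℝ} (hc : ∀ i, c ≤ hS.eigenvalues i) :
    c * Q.trace ≤ (S * Q).trace := by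
  set U : Matrix n n ℝ := (hS.eigenvectorUnitary : Matrix n n ℝ)
  set M : Matrix n n ℝ := star U * Q * U
  have hM : M.PosSemidef := hQ.conjTranspose_mul_mul_same U
  have hUU : U * star U = 1 := mem_unitaryGroup_iff.mp hS.eigenvectorUnitary.2
  have trace_M : M.trace = Q.trace := by
    rw [trace_mul_cycle, hUU, one_mul]
  have trace_SQ : (S * Q).trace = ∑ i, hS.eigenvalues i * M i i := by
    conv_lhs => rw [hS.spectral_theorem, Unitary.conjStarAlgAut_apply]
    rw [Matrix.mul_assoc (U * _), trace_mul_comm, ← Matrix.mul_assoc, trace_mul_comm]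
    simp [trace, diagonal_mul, M, U]
  rw [trace_SQ, ← trace_M, trace, Finset.mul_sum]
  exact Finset.sum_le_sum fun i _ => mul_le_mul_of_nonneg_right (hc i) hM.diag_nonneg

theorem PosDef.log_det_eq_sum_log_eigenvalues {Q : Matrix n n ℝ} (hQ : Q.PosDef) :
    Real.log Q.det = ∑ i, Real.log (hQ.1.eigenvalues i) := by
  rw [hQ.1.det_eq_prod_eigenvalues]
  exact Real.log_prod fun i _ => (hQ.eigenvalues_pos i).ne'

theorem PosDef.iInf_eigenvalues_pos [Nonempty n] {Q : Matrix n n ℝ} (hQ : Q.PosDef) :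
    0 < ⨅ i, hQ.1.eigenvalues i := by
  obtain ⟨i, hi⟩ := exists_eq_ciInf_of_finite (f := hQ.1.eigenvalues)
  exact hi ▸ hQ.eigenvalues_pos i

end Matrix

theorem Real.one_add_log_le_mul_sub_log {c x : ℝ} (hc : 0 < c) (hx : 0 < x) :
    1 + Real.log c ≤ c * x - Real.log x := by
  have := Real.log_le_sub_one_of_pos (mul_pos hc hx)
  rw [Real.log_mul hc.ne' hx.ne'] at this
  linarith

theorem sub_log_eigenvalue_le_gaussLoss {d : ℕ} {S Q : Matrix (Fin d) (Fin d) ℝ}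
    (hS : S.IsHermitian) (hQ : Q.PosDef) {c : ℝ} (hc0 : 0 < c)
    (hc : ∀ i, c ≤ hS.eigenvalues i) (j : Fin d) :
    (d - 1) * (1 + Real.log c) - Real.log (hQ.1.eigenvalues j) ≤ gaussLoss S Q := by
  set μ := hQ.1.eigenvalues
  have hμ : ∀ i, 0 < μ i := hQ.eigenvalues_pos
  have trace_bound : c * ∑ i, μ i ≤ (S * Q).trace := by
    simpa [hQ.1.trace_eq_sum_eigenvalues] using
      hS.mul_trace_le_trace_mul_of_le_eigenvalues hQ.posSemidef hc
  have sum_bound : c * μ j - Real.log (μ j) - (1 + Real.log c) ≤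
      ∑ i, (c * μ i - Real.log (μ i) - (1 + Real.log c)) :=
    Finset.single_le_sum (fun i _ => sub_nonneg.mpr (Real.one_add_log_le_mul_sub_log hc0 (hμ i)))
      (Finset.mem_univ j)
  simp only [Finset.sum_sub_distrib, ← Finset.mul_sum, Finset.sum_const, Finset.card_univ,
    Fintype.card_fin, nsmul_eq_mul] at sum_bound
  rw [gaussLoss, hQ.log_det_eq_sum_log_eigenvalues]
  linarith [mul_pos hc0 (hμ j)]

/-- If `S` is symmetric positive definite and `(Q k)` is a sequence of symmetric
positive definite matrices with `λ_min (Q k) → 0`, then `f_S (Q k) → +∞`. -/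
theorem stmt_4 {d : ℕ} (hd : 0 < d) (S : Matrix (Fin d) (Fin d) ℝ) (hS : S.PosDef)
    (Q : ℕ → Matrix (Fin d) (Fin d) ℝ) (hQ : ∀ k, (Q k).PosDef)
    (hmin : Tendsto (fun k => ⨅ i, (hQ k).1.eigenvalues i) atTop (nhds 0)) :
    Tendsto (fun k => gaussLoss S (Q k)) atTop atTop := by
  have : Nonempty (Fin d) := Fin.pos_iff_nonempty.mp hd
  set c := ⨅ i, hS.1.eigenvalues i
  have hc : ∀ i, c ≤ hS.1.eigenvalues i := fun i => ciInf_le (Finite.bddBelow_range _) i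
  have lower_bound : ∀ k, (d - 1) * (1 + Real.log c) - Real.log (⨅ i, (hQ k).1.eigenvalues i)
      ≤ gaussLoss S (Q k) := fun k => by
    obtain ⟨j, hj⟩ := exists_eq_ciInf_of_finite (f := (hQ k).1.eigenvalues)
    simpa [hj] using sub_log_eigenvalue_le_gaussLoss hS.1 (hQ k) hS.iInf_eigenvalues_pos hc j
  have log_min : Tendsto (fun k => Real.log (⨅ i, (hQ k).1.eigenvalues i)) atTop atBot :=
    Real.tendsto_log_nhdsGT_zero.comp <| tendsto_nhdsWithin_iff.mpr
      ⟨hmin, .of_forall fun k => (hQ k).iInf_eigenvalues_pos⟩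
  refine tendsto_atTop_mono lower_bound ?_
  exact tendsto_atTop_add_const_left _ _ (tendsto_neg_atBot_atTop.comp log_min)
end

section
/- For symmetric positive definite matrices Q₁ and Q₂ whose smallest eigenvalues are both at least λ > 0, the gradients of f_S satisfy ‖∇f_S(Q₁) − ∇f_S(Q₂)‖_F ≤ ‖Q₁ − Q₂‖_F / λ², where ∇f_S(Q) = S − Q⁻¹. -/
/-!
Since `Q₂⁻¹ - Q₁⁻¹ = Q₂⁻¹ (Q₁ - Q₂) Q₁⁻¹`, it suffices that multiplying by `Q⁻¹`, on either side,
shrinks the Frobenius norm by a factor `λ⁻¹`. Column by column this is the Euclidean bound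
`λ ‖x‖ ≤ ‖Q x‖`, which holds because in an orthonormal eigenbasis of `Q` every coordinate of `x`
is multiplied by an eigenvalue of modulus at least `λ`.
-/

open Matrix

/-- The Frobenius norm of a real matrix. -/
noncomputable def frobNorm {d : ℕ} (A : Matrix (Fin d) (Fin d) ℝ) : ℝ :=
  Real.sqrt (∑ i, ∑ j, (A i j) ^ 2)

open WithLp

attribute [local instance] Matrix.frobeniusNormedAddCommGroup

namespace Matrix

variable {𝕜 m n p : Type*} [RCLike 𝕜] [Fintype m] [Fintype n] [Fintype p]

lemma frobenius_norm_sq_eq_sum_norm_sq_row (M : Matrix m n 𝕜) :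
    ‖M‖ ^ 2 = ∑ i, ‖toLp 2 (M i)‖ ^ 2 :=
  PiLp.norm_sq_eq_of_L2 _ (toLp 2 fun i => toLp 2 (M i))

variable [DecidableEq n]

lemma frobenius_norm_mul_le_of_toEuclideanLin {A : Matrix m n 𝕜} {K : ℝ} (hK : 0 ≤ K)
    (hA : ∀ x, ‖toEuclideanLin A x‖ ≤ K * ‖x‖) (N : Matrix n p 𝕜) : ‖A * N‖ ≤ K * ‖N‖ := by
  rw [← frobenius_norm_transpose, ← frobenius_norm_transpose N]
  refine le_of_sq_le_sq ?_ (by positivity)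
  rw [mul_pow, frobenius_norm_sq_eq_sum_norm_sq_row, frobenius_norm_sq_eq_sum_norm_sq_row,
    Finset.mul_sum]
  refine Finset.sum_le_sum fun j _ => ?_
  have hcol : toLp 2 ((A * N)ᵀ j) = toEuclideanLin A (toLp 2 (Nᵀ j)) := rfl
  rw [hcol, ← mul_pow]
  exact pow_le_pow_left₀ (norm_nonneg _) (hA _) 2

namespace IsHermitian

variable {A : Matrix n n 𝕜}

lemma repr_toEuclideanLin_apply (hA : A.IsHermitian) (x : EuclideanSpace 𝕜 n) (i : n) :
    hA.eigenvectorBasis.repr (toEuclideanLin A x) i =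
      hA.eigenvalues i * hA.eigenvectorBasis.repr x i := by
  have hb : toEuclideanLin A (hA.eigenvectorBasis i) =
      (hA.eigenvalues i : 𝕜) • hA.eigenvectorBasis i := by
    rw [toLpLin_apply, hA.mulVec_eigenvectorBasis, RCLike.real_smul_eq_coe_smul (K := 𝕜)]
    rfl
  rw [OrthonormalBasis.repr_apply_apply, OrthonormalBasis.repr_apply_apply,
    ← isSymmetric_toEuclideanLin_iff.mpr hA, hb, inner_smul_left, RCLike.conj_ofReal]

lemma mul_norm_le_norm_toEuclideanLin (hA : A.IsHermitian) {c : ℝ}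
    (hc : ∀ i, c ≤ |hA.eigenvalues i|) (x : EuclideanSpace 𝕜 n) :
    c * ‖x‖ ≤ ‖toEuclideanLin A x‖ := by
  rcases le_or_gt c 0 with hc₀ | hc₀
  · exact (mul_nonpos_of_nonpos_of_nonneg hc₀ (norm_nonneg x)).trans (norm_nonneg _)
  refine le_of_sq_le_sq ?_ (norm_nonneg _)
  rw [← hA.eigenvectorBasis.repr.norm_map x,
    ← hA.eigenvectorBasis.repr.norm_map (toEuclideanLin A x),
    mul_pow, PiLp.norm_sq_eq_of_L2, PiLp.norm_sq_eq_of_L2, Finset.mul_sum]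
  refine Finset.sum_le_sum fun i _ => ?_
  rw [repr_toEuclideanLin_apply, norm_mul, mul_pow, RCLike.norm_ofReal]
  gcongr
  exact hc i

lemma isUnit_det_of_le_abs_eigenvalues (hA : A.IsHermitian) {c : ℝ} (hc₀ : 0 < c)
    (hc : ∀ i, c ≤ |hA.eigenvalues i|) : IsUnit A.det := by
  rw [isUnit_iff_ne_zero, hA.det_eq_prod_eigenvalues, Finset.prod_ne_zero_iff]
  intro i _
  exact_mod_cast abs_pos.mp (hc₀.trans_le (hc i))

lemma norm_toEuclideanLin_inv_le (hA : A.IsHermitian) {c : ℝ} (hc₀ : 0 < c)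
    (hc : ∀ i, c ≤ |hA.eigenvalues i|) (x : EuclideanSpace 𝕜 n) :
    ‖toEuclideanLin A⁻¹ x‖ ≤ c⁻¹ * ‖x‖ := by
  have hAA : toEuclideanLin A (toEuclideanLin A⁻¹ x) = x := by
    rw [toLpLin_apply, toLpLin_apply, mulVec_mulVec,
      mul_nonsing_inv _ (hA.isUnit_det_of_le_abs_eigenvalues hc₀ hc), one_mulVec]
  rw [le_inv_mul_iff₀ hc₀]
  simpa only [hAA] using hA.mul_norm_le_norm_toEuclideanLin hc (toEuclideanLin A⁻¹ x)

lemma frobenius_norm_inv_mul_le (hA : A.IsHermitian) {c : ℝ} (hc₀ : 0 < c)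
    (hc : ∀ i, c ≤ |hA.eigenvalues i|) (N : Matrix n p 𝕜) : ‖A⁻¹ * N‖ ≤ c⁻¹ * ‖N‖ :=
  frobenius_norm_mul_le_of_toEuclideanLin (inv_nonneg.mpr hc₀.le)
    (hA.norm_toEuclideanLin_inv_le hc₀ hc) N

lemma frobenius_norm_mul_inv_le (hA : A.IsHermitian) {c : ℝ} (hc₀ : 0 < c)
    (hc : ∀ i, c ≤ |hA.eigenvalues i|) (N : Matrix p n 𝕜) : ‖N * A⁻¹‖ ≤ c⁻¹ * ‖N‖ := by
  rw [← frobenius_norm_conjTranspose, conjTranspose_mul, hA.inv.eq,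
    ← frobenius_norm_conjTranspose N]
  exact hA.frobenius_norm_inv_mul_le hc₀ hc Nᴴ

end IsHermitian

end Matrix

lemma frobNorm_eq_norm {d : ℕ} (A : Matrix (Fin d) (Fin d) ℝ) : frobNorm A = ‖A‖ := by
  rw [frobenius_norm_def, ← Real.sqrt_eq_rpow, frobNorm]
  simp only [Real.norm_eq_abs, Real.rpow_two, sq_abs]

theorem stmt_5_general {d : ℕ} (S : Matrix (Fin d) (Fin d) ℝ)
    (Q₁ Q₂ : Matrix (Fin d) (Fin d) ℝ) (hQ₁ : Q₁.PosDef) (hQ₂ : Q₂.PosDef)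
    (lam : ℝ) (hlam : 0 < lam)
    (h₁ : ∀ i, lam ≤ hQ₁.1.eigenvalues i) (h₂ : ∀ i, lam ≤ hQ₂.1.eigenvalues i) :
    frobNorm ((S - Q₁⁻¹) - (S - Q₂⁻¹)) ≤ frobNorm (Q₁ - Q₂) / lam ^ 2 := by
  have h₁' : ∀ i, lam ≤ |hQ₁.1.eigenvalues i| := fun i => (h₁ i).trans (le_abs_self _)
  have h₂' : ∀ i, lam ≤ |hQ₂.1.eigenvalues i| := fun i => (h₂ i).trans (le_abs_self _)
  have hres : (S - Q₁⁻¹) - (S - Q₂⁻¹) = Q₂⁻¹ * (Q₁ - Q₂) * Q₁⁻¹ := by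
    rw [sub_sub_sub_cancel_left, nonsing_inv_eq_ringInverse, nonsing_inv_eq_ringInverse,
      Ring.inverse_sub_inverse (iff_of_true hQ₂.isUnit hQ₁.isUnit)]
  rw [frobNorm_eq_norm, frobNorm_eq_norm, hres, mul_assoc]
  calc ‖Q₂⁻¹ * ((Q₁ - Q₂) * Q₁⁻¹)‖
      ≤ lam⁻¹ * ‖(Q₁ - Q₂) * Q₁⁻¹‖ := hQ₂.1.frobenius_norm_inv_mul_le hlam h₂' _
    _ ≤ lam⁻¹ * (lam⁻¹ * ‖Q₁ - Q₂‖) := by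
      gcongr
      exact hQ₁.1.frobenius_norm_mul_inv_le hlam h₁' _
    _ = ‖Q₁ - Q₂‖ / lam ^ 2 := by field_simp

/-- For symmetric positive definite `Q₁, Q₂` whose smallest eigenvalues are at
least `λ > 0`, the gradients `∇f_S(Q) = S − Q⁻¹` of the Gaussian graphical loss
satisfy `‖∇f_S(Q₁) − ∇f_S(Q₂)‖_F ≤ ‖Q₁ − Q₂‖_F / λ²`. -/
theorem stmt_5 {d : ℕ} (S : Matrix (Fin d) (Fin d) ℝ) (hS : S.PosSemidef)
    (Q₁ Q₂ : Matrix (Fin d) (Fin d) ℝ) (hQ₁ : Q₁.PosDef) (hQ₂ : Q₂.PosDef)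
    (lam : ℝ) (hlam : 0 < lam)
    (h₁ : ∀ i, lam ≤ hQ₁.1.eigenvalues i) (h₂ : ∀ i, lam ≤ hQ₂.1.eigenvalues i) :
    frobNorm ((S - Q₁⁻¹) - (S - Q₂⁻¹)) ≤ frobNorm (Q₁ - Q₂) / lam ^ 2 :=
  stmt_5_general S Q₁ Q₂ hQ₁ hQ₂ lam hlam h₁ h₂
end

section
/- Exact block update: Let S, Q be d×d symmetric positive definite matrices, I ⊆ {1,…,d} of size m, and R = Q⁻¹. Define Q̃ to agree with Q outside the I×I block, while Q̃_{I,I} = Q_{I,I} + (S_{I,I})⁻¹ − (R_{I,I})⁻¹. Then Q̃ is symmetric positive definite and minimises f_S over the affine set of symmetric positive definite matrices agreeing with Q outside the I×I block, where f_S(Q) = tr(SQ) − log det Q. -/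
open Matrix

/-- The `s × t` block of a matrix. -/
def blk {d : ℕ} (A : Matrix (Fin d) (Fin d) ℝ) (s t : Finset (Fin d)) :
    Matrix ↥s ↥t ℝ :=
  Matrix.of fun i j => A i.1 j.1

/-- The exact block update of `Q`: it agrees with `Q` outside the `I × I` block,
and `Q̃_{I,I} = Q_{I,I} + (S_{I,I})⁻¹ − (R_{I,I})⁻¹` with `R = Q⁻¹`. -/
noncomputable def blockUpdate {d : ℕ} (S Q : Matrix (Fin d) (Fin d) ℝ)
    (s : Finset (Fin d)) : Matrix (Fin d) (Fin d) ℝ :=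
  Matrix.of fun i j =>
    if hi : i ∈ s then
      if hj : j ∈ s then
        Q i j + ((blk S s s)⁻¹ - (blk Q⁻¹ s s)⁻¹) ⟨i, hi⟩ ⟨j, hj⟩
      else Q i j
    else Q i j

/-! After listing the indices of `I` first, a feasible matrix is `[[U, B], [Bᴴ, D]]` with `B` and
`D` those of `Q`. Its determinant is `det D · det M` for the Schur complement `M = U - B D⁻¹ Bᴴ`,
and `tr (S Q')` depends on `U` only through `tr (S_{I,I} U)`, so up to a constant
`f_S(Q') = tr (S_{I,I} M) - log det M`, with `M` ranging over positive definite matrices. Applying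
`log x ≤ x - 1` to eigenvalues shows this is minimised at `M = (S_{I,I})⁻¹`; since `(R_{I,I})⁻¹` is
the Schur complement of `Q` itself, the update `Q̃` is exactly the feasible matrix with that `M`. -/

namespace Matrix

variable {m n 𝕜 : Type*}

open scoped ComplexOrder in
theorem posDef_submatrix_equiv [RCLike 𝕜] {M : Matrix n n 𝕜} (e : m ≃ n) :
    (M.submatrix e e).PosDef ↔ M.PosDef :=
  ⟨fun h => by simpa using h.submatrix e.symm.injective, fun h => h.submatrix e.injective⟩

variable [Fintype m] [Fintype n]

theorem trace_fromBlocks [AddCommMonoid 𝕜] (A : Matrix m m 𝕜) (B : Matrix m n 𝕜)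
    (C : Matrix n m 𝕜) (D : Matrix n n 𝕜) : (fromBlocks A B C D).trace = A.trace + D.trace := by
  simp [trace, Fintype.sum_sum_type]

variable [DecidableEq m] [DecidableEq n]

open scoped ComplexOrder

theorem PosDef.fromBlocks₂₂_iff [RCLike 𝕜] {A : Matrix m m 𝕜} (B : Matrix m n 𝕜)
    {D : Matrix n n 𝕜} (hD : D.PosDef) :
    (fromBlocks A B Bᴴ D).PosDef ↔ (A - B * D⁻¹ * Bᴴ).PosDef := by
  have := hD.isUnit.invertible
  have hdet := det_fromBlocks₂₂ A B Bᴴ D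
  rw [invOf_eq_nonsing_inv] at hdet
  have hD₀ : D.det ≠ 0 := hD.det_pos.ne'
  constructor
  · intro h
    refine ((PosDef.fromBlocks₂₂ A B hD).1 h.posSemidef).posDef_iff_det_ne_zero.2 ?_
    simpa [hdet, hD₀] using h.det_pos.ne'
  · intro h
    refine ((PosDef.fromBlocks₂₂ A B hD).2 h.posSemidef).posDef_iff_det_ne_zero.2 ?_
    simpa [hdet, hD₀] using h.det_pos.ne'

theorem toBlocks₁₁_inv_fromBlocks [CommRing 𝕜] {A : Matrix m m 𝕜} {B : Matrix m n 𝕜}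
    {C : Matrix n m 𝕜} {D : Matrix n n 𝕜} [Invertible D] (h : IsUnit (A - B * D⁻¹ * C)) :
    (fromBlocks A B C D)⁻¹.toBlocks₁₁ = (A - B * D⁻¹ * C)⁻¹ := by
  rw [← invOf_eq_nonsing_inv D] at h ⊢
  have := h.invertible
  have := fromBlocks₂₂Invertible A B C D
  rw [← invOf_eq_nonsing_inv, ← invOf_eq_nonsing_inv, invOf_fromBlocks₂₂_eq, toBlocks_fromBlocks₁₁]

end Matrix

section LogDetLoss

variable {m n : Type*} [Fintype m] [Fintype n] [DecidableEq m] [DecidableEq n]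

/-- `gaussLoss`, over an arbitrary finite index type. -/
noncomputable def logDetLoss (S Q : Matrix n n ℝ) : ℝ :=
  (S * Q).trace - Real.log Q.det

theorem logDetLoss_submatrix_equiv (S Q : Matrix n n ℝ) (e : m ≃ n) :
    logDetLoss (S.submatrix e e) (Q.submatrix e e) = logDetLoss S Q := by
  rw [logDetLoss, logDetLoss, submatrix_mul_equiv, det_submatrix_equiv_self]
  simp only [trace, diag_apply, submatrix_apply]
  rw [Equiv.sum_comp e fun i => (S * Q) i i]

theorem card_le_trace_sub_log_det {X : Matrix n n ℝ} (hX : X.PosDef) :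
    (Fintype.card n : ℝ) ≤ X.trace - Real.log X.det := by
  have hpos := hX.eigenvalues_pos
  rw [hX.isHermitian.trace_eq_sum_eigenvalues, hX.isHermitian.det_eq_prod_eigenvalues]
  simp only [RCLike.ofReal_real_eq_id, id_eq]
  rw [Real.log_prod fun i _ => (hpos i).ne', ← Finset.sum_sub_distrib, ← nsmul_one,
    ← Finset.card_univ, ← Finset.sum_const]
  gcongr with i
  linarith [Real.log_le_sub_one_of_pos (hpos i)]

theorem logDetLoss_inv_le {A M : Matrix n n ℝ} (hA : A.PosDef) (hM : M.PosDef) :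
    logDetLoss A A⁻¹ ≤ logDetLoss A M := by
  open scoped MatrixOrder in
  obtain ⟨Y, hAY⟩ := CStarAlgebra.nonneg_iff_eq_star_mul_self.1 hA.posSemidef.nonneg
  have hY : IsUnit Y := isUnit_of_mul_isUnit_right (hAY ▸ hA.isUnit)
  -- Conjugating by the factor `Y` of `A = Yᴴ Y` turns `tr (A M)` into the trace of a positive
  -- definite matrix, whose eigenvalues are then controlled by `log x ≤ x - 1`.
  have hX : (Y * M * star Y).PosDef := (IsUnit.posDef_star_right_conjugate_iff hY).2 hM
  have htrace : (Y * M * star Y).trace = (A * M).trace := by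
    rw [trace_mul_cycle, hAY, Matrix.mul_assoc]
  have hdet : (Y * M * star Y).det = A.det * M.det := by
    rw [hAY, det_mul, det_mul, det_mul]; ring
  have hloss : logDetLoss A A⁻¹ = Fintype.card n + Real.log A.det := by
    rw [logDetLoss, mul_nonsing_inv _ ((isUnit_iff_isUnit_det A).1 hA.isUnit), trace_one, det_nonsing_inv,
      Ring.inverse_eq_inv', Real.log_inv, sub_neg_eq_add]
  have := card_le_trace_sub_log_det hX
  rw [htrace, hdet, Real.log_mul hA.det_pos.ne' hM.det_pos.ne'] at this
  rw [hloss, logDetLoss]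
  linarith

theorem logDetLoss_fromBlocks_sub_logDetLoss_fromBlocks (S : Matrix (m ⊕ n) (m ⊕ n) ℝ)
    {U₁ U₂ : Matrix m m ℝ} {B : Matrix m n ℝ} {C : Matrix n m ℝ} {D : Matrix n n ℝ}
    [Invertible D] (h₁ : (U₁ - B * D⁻¹ * C).det ≠ 0) (h₂ : (U₂ - B * D⁻¹ * C).det ≠ 0) :
    logDetLoss S (fromBlocks U₁ B C D) - logDetLoss S (fromBlocks U₂ B C D) =
      logDetLoss S.toBlocks₁₁ (U₁ - B * D⁻¹ * C) - logDetLoss S.toBlocks₁₁ (U₂ - B * D⁻¹ * C) := by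
  have hD : D.det ≠ 0 := (isUnit_det_of_invertible D).ne_zero
  rw [← fromBlocks_toBlocks S]
  simp only [logDetLoss, fromBlocks_multiply, trace_fromBlocks, det_fromBlocks₂₂,
    invOf_eq_nonsing_inv, Real.log_mul hD h₁, Real.log_mul hD h₂, toBlocks_fromBlocks₁₁,
    Matrix.mul_sub, trace_sub, trace_add]
  ring

end LogDetLoss

section BlockUpdate

variable {d : ℕ} (s : Finset (Fin d))

def blockEquiv : (s ⊕ (sᶜ : Finset (Fin d))) ≃ Fin d :=
  (Equiv.sumCongr (Equiv.refl _) (Equiv.subtypeEquivRight fun _ => Finset.mem_compl)).trans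
    (Equiv.sumCompl (· ∈ s))

theorem submatrix_blockEquiv (A : Matrix (Fin d) (Fin d) ℝ) :
    A.submatrix (blockEquiv s) (blockEquiv s) =
      fromBlocks (blk A s s) (blk A s sᶜ) (blk A sᶜ s) (blk A sᶜ sᶜ) := by
  ext (i | i) (j | j) <;> rfl

theorem blk_conjTranspose {A : Matrix (Fin d) (Fin d) ℝ} (hA : A.IsHermitian) (t : Finset (Fin d)) :
    (blk A s t)ᴴ = blk A t s := by
  ext i j
  exact hA.apply _ _

def AgreeOffBlock (Q' Q : Matrix (Fin d) (Fin d) ℝ) : Prop :=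
  ∀ i j, (i ∉ s ∨ j ∉ s) → Q' i j = Q i j

theorem submatrix_blockEquiv_of_agreeOffBlock {Q' Q : Matrix (Fin d) (Fin d) ℝ}
    (hQ : Q.IsHermitian) (h : AgreeOffBlock s Q' Q) :
    Q'.submatrix (blockEquiv s) (blockEquiv s) =
      fromBlocks (blk Q' s s) (blk Q s sᶜ) (blk Q s sᶜ)ᴴ (blk Q sᶜ sᶜ) := by
  rw [submatrix_blockEquiv, blk_conjTranspose s hQ]
  congr 1 <;> ext i j
  · exact h i j (Or.inr (Finset.mem_compl.1 j.2))
  · exact h i j (Or.inl (Finset.mem_compl.1 i.2))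
  · exact h i j (Or.inl (Finset.mem_compl.1 i.2))

theorem inv_blk_inv {Q : Matrix (Fin d) (Fin d) ℝ} (hQ : Q.PosDef) :
    (blk Q⁻¹ s s)⁻¹ = blk Q s s - blk Q s sᶜ * (blk Q sᶜ sᶜ)⁻¹ * (blk Q s sᶜ)ᴴ := by
  have hD : (blk Q sᶜ sᶜ).PosDef := hQ.submatrix Subtype.val_injective
  have := hD.isUnit.invertible
  have hQ' := hQ.submatrix (blockEquiv s).injective
  rw [submatrix_blockEquiv_of_agreeOffBlock s hQ.isHermitian fun _ _ _ => rfl] at hQ'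
  have hschur := ((PosDef.fromBlocks₂₂_iff _ hD).1 hQ').isUnit
  have hblk : blk Q⁻¹ s s = (Q.submatrix (blockEquiv s) (blockEquiv s))⁻¹.toBlocks₁₁ := by
    rw [inv_submatrix_equiv, submatrix_blockEquiv]
    rfl
  rw [hblk, submatrix_blockEquiv_of_agreeOffBlock s hQ.isHermitian fun _ _ _ => rfl,
    toBlocks₁₁_inv_fromBlocks hschur,
    nonsing_inv_nonsing_inv _ ((isUnit_iff_isUnit_det _).1 hschur)]

theorem agreeOffBlock_blockUpdate (S Q : Matrix (Fin d) (Fin d) ℝ) :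
    AgreeOffBlock s (blockUpdate S Q s) Q := by
  rintro i j (hi | hj)
  · simp [blockUpdate, hi]
  · by_cases hi : i ∈ s <;> simp [blockUpdate, hi, hj]

theorem blk_blockUpdate (S Q : Matrix (Fin d) (Fin d) ℝ) :
    blk (blockUpdate S Q s) s s = blk Q s s + ((blk S s s)⁻¹ - (blk Q⁻¹ s s)⁻¹) := by
  ext i j
  simp [blk, blockUpdate]

end BlockUpdate

/-- Exact block update: for `S, Q` symmetric positive definite and an index set
`I`, the updated matrix `Q̃` is symmetric positive definite and minimises `f_S`
over all symmetric positive definite matrices agreeing with `Q` outside the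
`I × I` block. -/
theorem stmt_12 {d : ℕ} (S Q : Matrix (Fin d) (Fin d) ℝ)
    (hS : S.PosDef) (hQ : Q.PosDef) (s : Finset (Fin d)) :
    (blockUpdate S Q s).PosDef ∧
      ∀ Q' : Matrix (Fin d) (Fin d) ℝ, Q'.PosDef →
        (∀ i j, (i ∉ s ∨ j ∉ s) → Q' i j = Q i j) →
        gaussLoss S (blockUpdate S Q s) ≤ gaussLoss S Q' := by
  set e := blockEquiv s
  set K := blk Q s sᶜ * (blk Q sᶜ sᶜ)⁻¹ * (blk Q s sᶜ)ᴴ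
  have hblocks := fun Q' => submatrix_blockEquiv_of_agreeOffBlock (Q' := Q') s hQ.isHermitian
  have hD : (blk Q sᶜ sᶜ).PosDef := hQ.submatrix Subtype.val_injective
  have := hD.isUnit.invertible
  have hW : (blk S s s).PosDef := hS.submatrix Subtype.val_injective
  have hschur : ∀ Q', Q'.PosDef → AgreeOffBlock s Q' Q → (blk Q' s s - K).PosDef :=
    fun Q' hQ' h => (PosDef.fromBlocks₂₂_iff _ hD).1 (hblocks Q' h ▸ hQ'.submatrix e.injective)
  have hfeasible := agreeOffBlock_blockUpdate s S Q
  have hupdate : blk (blockUpdate S Q s) s s - K = (blk S s s)⁻¹ := by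
    rw [blk_blockUpdate, inv_blk_inv s hQ]; abel
  have hupdate_pd : (blockUpdate S Q s).PosDef := by
    rw [← posDef_submatrix_equiv e, hblocks _ hfeasible, PosDef.fromBlocks₂₂_iff _ hD, hupdate]
    exact hW.inv
  refine ⟨hupdate_pd, fun Q' hQ' h => ?_⟩
  have key := logDetLoss_fromBlocks_sub_logDetLoss_fromBlocks (S.submatrix e e)
    (hschur Q' hQ' h).det_pos.ne' (hupdate ▸ hW.inv.det_pos.ne')
  rw [← hblocks Q' h, ← hblocks _ hfeasible, logDetLoss_submatrix_equiv, logDetLoss_submatrix_equiv,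
    submatrix_blockEquiv, toBlocks_fromBlocks₁₁, hupdate] at key
  have := logDetLoss_inv_le hW (hschur Q' hQ' h)
  change logDetLoss _ _ ≤ logDetLoss _ _
  linarith
end

section
/- In the setting of the exact block update, the inverse R̃ = Q̃⁻¹ of the updated matrix satisfies R̃_{I,I} = S_{I,I}, R̃_{I,Iᶜ} = S_{I,I}(R_{I,I})⁻¹ R_{I,Iᶜ}, and R̃_{Iᶜ,Iᶜ} = R_{Iᶜ,Iᶜ} − R_{Iᶜ,I}(R_{I,I})⁻¹[I_m − S_{I,I}(R_{I,I})⁻¹] R_{I,Iᶜ}. -/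
open Matrix

/-!
With `E_J` the matrix of the coordinate inclusion `ℝ^J → ℝ^d` and `E = E_I`, blocks are
`M_{J,J'} = E_Jᵀ M E_{J'}` and `Q̃ = Q + E D Eᵀ` with `D = (S_{I,I})⁻¹ − (R_{I,I})⁻¹`.
As `D` need not be invertible, the Woodbury identity is replaced by
`(Q + E D Eᵀ)⁻¹ = R − R E K Eᵀ R` for any `K` with `(1 + D R_{I,I}) K = D`, which holds for
`K = (R_{I,I})⁻¹ (1 − S_{I,I} (R_{I,I})⁻¹)`. Hence `R̃_{J,J'} = R_{J,J'} − R_{J,I} K R_{I,J'}`,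
and the three blocks simplify to the claim.
-/

namespace Matrix

section Inclusion

variable {n l : Type*} (R : Type*) [DecidableEq n] [Semiring R]

def incl (s : Finset n) : Matrix n s R :=
  (1 : Matrix n n R).submatrix id (↑)

variable {R}

theorem incl_mul_apply (s : Finset n) (M : Matrix s l R) (i : n) (j : l) :
    (incl R s * M) i j = if hi : i ∈ s then M ⟨i, hi⟩ j else 0 := by
  simp only [incl, mul_apply, submatrix_apply, id, one_apply]
  split_ifs with hi
  · rw [Fintype.sum_eq_single ⟨i, hi⟩ fun k hk => ?_]
    · simp
    · simpa using fun h => absurd (Subtype.ext h.symm) hk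
  · exact Finset.sum_eq_zero fun k _ => by
      simpa using fun h : i = k => absurd (h ▸ k.2) hi

theorem mul_incl_transpose_apply (s : Finset n) (M : Matrix l s R) (i : l) (j : n) :
    (M * (incl R s)ᵀ) i j = if hj : j ∈ s then M i ⟨j, hj⟩ else 0 := by
  simp only [incl, mul_apply, transpose_apply, submatrix_apply, id, one_apply]
  split_ifs with hj
  · rw [Fintype.sum_eq_single ⟨j, hj⟩ fun k hk => ?_]
    · simp
    · simpa using fun h => absurd (Subtype.ext h.symm) hk
  · exact Finset.sum_eq_zero fun k _ => by
      simpa using fun h : j = k => absurd (h ▸ k.2) hj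

theorem incl_mul_mul_incl_transpose_apply (s : Finset n) (M : Matrix s s R) (i j : n) :
    (incl R s * M * (incl R s)ᵀ) i j
      = if hi : i ∈ s then (if hj : j ∈ s then M ⟨i, hi⟩ ⟨j, hj⟩ else 0) else 0 := by
  rw [Matrix.mul_assoc, incl_mul_apply]
  simp only [mul_incl_transpose_apply]

theorem incl_transpose_mul_mul_incl [Fintype n] (M : Matrix n n R) (s t : Finset n) :
    (incl R s)ᵀ * M * incl R t = M.submatrix ((↑) : s → n) ((↑) : t → n) := by
  ext i j
  simp [incl, mul_apply, one_apply]

end Inclusion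

variable {n m R : Type*} [Fintype n] [DecidableEq n] [Fintype m] [DecidableEq m] [CommRing R]

theorem add_mul_mul_inv_eq_sub_of_mul_eq (Q : Matrix n n R) (U : Matrix n m R)
    (D K : Matrix m m R) (V : Matrix m n R) (hQ : IsUnit Q.det)
    (hK : (1 + D * (V * Q⁻¹ * U)) * K = D) :
    (Q + U * D * V)⁻¹ = Q⁻¹ - Q⁻¹ * U * K * V * Q⁻¹ := by
  refine inv_eq_right_inv ?_
  calc (Q + U * D * V) * (Q⁻¹ - Q⁻¹ * U * K * V * Q⁻¹)
      = 1 + U * (D - (1 + D * (V * Q⁻¹ * U)) * K) * (V * Q⁻¹) := by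
        simp only [Matrix.add_mul, Matrix.mul_add, Matrix.sub_mul, Matrix.mul_sub,
          Matrix.mul_assoc, Matrix.one_mul, mul_nonsing_inv _ hQ,
          mul_nonsing_inv_cancel_left _ _ hQ]
        abel
    _ = 1 := by rw [hK, sub_self, Matrix.mul_zero, Matrix.zero_mul, add_zero]

theorem one_add_inv_sub_inv_mul_mul_inv_mul_one_sub (A T : Matrix m m R) (hA : IsUnit A.det)
    (hT : IsUnit T.det) :
    (1 + (T⁻¹ - A⁻¹) * A) * (A⁻¹ * (1 - T * A⁻¹)) = T⁻¹ - A⁻¹ := by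
  rw [sub_mul, nonsing_inv_mul _ hA, add_sub_cancel, Matrix.mul_assoc,
    mul_nonsing_inv_cancel_left _ _ hA, mul_sub, mul_one, nonsing_inv_mul_cancel_left _ _ hT]

theorem inv_add_incl_mul_mul_incl_transpose (Q : Matrix n n R) (s : Finset n)
    (T : Matrix s s R) (hQ : IsUnit Q.det)
    (hA : IsUnit (Q⁻¹.submatrix ((↑) : s → n) ((↑) : s → n)).det) (hT : IsUnit T.det) :
    (Q + incl R s * (T⁻¹ - (Q⁻¹.submatrix ((↑) : s → n) ((↑) : s → n))⁻¹) * (incl R s)ᵀ)⁻¹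
      = Q⁻¹ - Q⁻¹ * incl R s * ((Q⁻¹.submatrix ((↑) : s → n) ((↑) : s → n))⁻¹ *
          (1 - T * (Q⁻¹.submatrix ((↑) : s → n) ((↑) : s → n))⁻¹)) * (incl R s)ᵀ * Q⁻¹ := by
  refine add_mul_mul_inv_eq_sub_of_mul_eq _ _ _ _ _ hQ ?_
  rw [incl_transpose_mul_mul_incl]
  exact one_add_inv_sub_inv_mul_mul_inv_mul_one_sub _ _ hA hT

theorem submatrix_sub_mul_incl_mul_incl_transpose_mul (P : Matrix n n R) (s a b : Finset n)
    (K : Matrix s s R) :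
    (P - P * incl R s * K * (incl R s)ᵀ * P).submatrix ((↑) : a → n) ((↑) : b → n)
      = P.submatrix (↑) (↑) - P.submatrix ((↑) : a → n) ((↑) : s → n) * K *
          P.submatrix ((↑) : s → n) ((↑) : b → n) := by
  simp only [← incl_transpose_mul_mul_incl, Matrix.mul_sub, Matrix.sub_mul, Matrix.mul_assoc]

end Matrix

theorem blk_eq_submatrix {d : ℕ} (A : Matrix (Fin d) (Fin d) ℝ) (s t : Finset (Fin d)) :
    blk A s t = A.submatrix (↑) (↑) :=
  rfl

theorem isUnit_det_blk_of_posDef {d : ℕ} {M : Matrix (Fin d) (Fin d) ℝ} (hM : M.PosDef)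
    (s : Finset (Fin d)) : IsUnit (blk M s s).det :=
  (isUnit_iff_isUnit_det _).mp (hM.submatrix Subtype.val_injective).isUnit

theorem blockUpdate_eq_add {d : ℕ} (S Q : Matrix (Fin d) (Fin d) ℝ) (s : Finset (Fin d)) :
    blockUpdate S Q s = Q + incl ℝ s * ((blk S s s)⁻¹ - (blk Q⁻¹ s s)⁻¹) * (incl ℝ s)ᵀ := by
  ext i j
  rw [Matrix.add_apply, incl_mul_mul_incl_transpose_apply]
  by_cases hi : i ∈ s <;> by_cases hj : j ∈ s <;> simp [blockUpdate, hi, hj]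

theorem blk_inv_blockUpdate {d : ℕ} (S Q : Matrix (Fin d) (Fin d) ℝ) (hS : S.PosDef)
    (hQ : Q.PosDef) (s a b : Finset (Fin d)) :
    blk (blockUpdate S Q s)⁻¹ a b = blk Q⁻¹ a b - blk Q⁻¹ a s *
      ((blk Q⁻¹ s s)⁻¹ * (1 - blk S s s * (blk Q⁻¹ s s)⁻¹)) * blk Q⁻¹ s b := by
  have hA := isUnit_det_blk_of_posDef hQ.inv s
  have hT := isUnit_det_blk_of_posDef hS s
  rw [blockUpdate_eq_add]
  simp only [blk_eq_submatrix] at hA hT ⊢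
  rw [inv_add_incl_mul_mul_incl_transpose Q s _ ((isUnit_iff_isUnit_det Q).mp hQ.isUnit) hA hT]
  exact submatrix_sub_mul_incl_mul_incl_transpose_mul _ _ _ _ _

/-- Blocks of the inverse of the exact block update: with `R = Q⁻¹` and
`R̃ = Q̃⁻¹`, one has `R̃_{I,I} = S_{I,I}`,
`R̃_{I,Iᶜ} = S_{I,I} (R_{I,I})⁻¹ R_{I,Iᶜ}`, and
`R̃_{Iᶜ,Iᶜ} = R_{Iᶜ,Iᶜ} − R_{Iᶜ,I}(R_{I,I})⁻¹[I − S_{I,I}(R_{I,I})⁻¹]R_{I,Iᶜ}`. -/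
theorem stmt_13 {d : ℕ} (S Q : Matrix (Fin d) (Fin d) ℝ)
    (hS : S.PosDef) (hQ : Q.PosDef) (s : Finset (Fin d)) :
    blk (blockUpdate S Q s)⁻¹ s s = blk S s s ∧
      blk (blockUpdate S Q s)⁻¹ s sᶜ
        = blk S s s * (blk Q⁻¹ s s)⁻¹ * blk Q⁻¹ s sᶜ ∧
      blk (blockUpdate S Q s)⁻¹ sᶜ sᶜ
        = blk Q⁻¹ sᶜ sᶜ - blk Q⁻¹ sᶜ s * (blk Q⁻¹ s s)⁻¹ *
            (1 - blk S s s * (blk Q⁻¹ s s)⁻¹) * blk Q⁻¹ s sᶜ := by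
  have hA := isUnit_det_blk_of_posDef hQ.inv s
  simp only [blk_inv_blockUpdate S Q hS hQ, mul_nonsing_inv_cancel_left _ _ hA]
  refine ⟨?_, ?_, ?_⟩
  · rw [Matrix.sub_mul, Matrix.one_mul, Matrix.mul_assoc, nonsing_inv_mul _ hA, Matrix.mul_one,
      sub_sub_cancel]
  · rw [Matrix.sub_mul, Matrix.one_mul, sub_sub_cancel]
  · simp only [Matrix.mul_assoc]
end
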